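/- Let w_1, ..., w_r and ŵ_1, ..., ŵ_R be unit vectors in ℝ^d. Suppose the operator norm of ∑_{i=1}^r w_i w_i^T - (r/d)·I_d is at most η·r/d for some η > 0, and |⟨w_i, ŵ_j⟩| ≤ ε for all i ∈ [r] and j ∈ [R] where ε ∈ (0,1). Then for every integer k ≥ 3, ∑_{i=1}^r ∑_{j=1}^R ⟨w_i, ŵ_j⟩^k ≤ ε^{k-2} · (1+η) · r·R/d. -/
import Mathlib


open scoped RealInnerProductSpace
open Finset

/-- correlation bound for higher-order tensor correlations under
approximate isotropy of the weights. The operator-norm condition on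
`∑ᵢ wᵢ wᵢᵀ - (r/d) I` is expressed through its quadratic form on unit vectors. -/
theorem lemma_corr_weights {d r R : ℕ} (hd : 0 < d)
    (w : Fin r → EuclideanSpace ℝ (Fin d)) (w' : Fin R → EuclideanSpace ℝ (Fin d))
    (ε η : ℝ) (hη : 0 < η) (hε : ε ∈ Set.Ioo (0 : ℝ) 1)
    (hw : ∀ i, ‖w i‖ = 1) (hw' : ∀ j, ‖w' j‖ = 1)
    (hop : ∀ v : EuclideanSpace ℝ (Fin d), ‖v‖ = 1 →
      |(∑ i, ⟪w i, v⟫ ^ 2) - (r : ℝ) / d| ≤ η * r / d)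
    (hcorr : ∀ i j, |⟪w i, w' j⟫| ≤ ε) :
    ∀ k : ℕ, 3 ≤ k →
      ∑ i, ∑ j, ⟪w i, w' j⟫ ^ k ≤ ε ^ (k - 2) * (1 + η) * ((r : ℝ) * R / d) := by
  intro k hk
  obtain ⟨hε0, hε1⟩ := hε
  have key : ∀ i j, ⟪w i, w' j⟫ ^ k ≤ ε ^ (k - 2) * ⟪w i, w' j⟫ ^ 2 := by
    intro i j
    set x := ⟪w i, w' j⟫ with hx
    calc x ^ k ≤ |x ^ k| := le_abs_self _
      _ = |x| ^ (k - 2) * |x| ^ 2 := by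
          rw [abs_pow, ← pow_add]
          congr 1
          omega
      _ ≤ ε ^ (k - 2) * |x| ^ 2 := by
          apply mul_le_mul_of_nonneg_right _ (by positivity)
          exact pow_le_pow_left₀ (abs_nonneg _) (hcorr i j) _
      _ = ε ^ (k - 2) * x ^ 2 := by rw [sq_abs]
  have hsum : ∀ j, ∑ i, ⟪w i, w' j⟫ ^ 2 ≤ (1 + η) * ((r : ℝ) / d) := by
    intro j
    have h := hop (w' j) (hw' j)
    have h2 := (abs_le.mp h).2
    have : η * ↑r / ↑d = η * ((r:ℝ)/d) := by ring
    linarith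
  calc ∑ i, ∑ j, ⟪w i, w' j⟫ ^ k
      ≤ ∑ i, ∑ j, ε ^ (k - 2) * ⟪w i, w' j⟫ ^ 2 := by
        apply Finset.sum_le_sum; intro i _
        exact Finset.sum_le_sum fun j _ => key i j
    _ = ε ^ (k - 2) * ∑ j, ∑ i, ⟪w i, w' j⟫ ^ 2 := by
        rw [Finset.sum_comm, Finset.mul_sum]
        congr 1; ext j; rw [Finset.mul_sum]
    _ ≤ ε ^ (k - 2) * ∑ j : Fin R, (1 + η) * ((r : ℝ) / d) := by
        apply mul_le_mul_of_nonneg_left _ (by positivity)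
        exact Finset.sum_le_sum fun j _ => hsum j
    _ = ε ^ (k - 2) * (1 + η) * ((r : ℝ) * R / d) := by
        rw [Finset.sum_const, card_univ, Fintype.card_fin]
        push_cast; ring
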